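/- arXiv:2410.07465 — 2 statements merged into one kernel-verified Lean document; each statement's English description precedes it below -/
import Mathlib

section
/- Stability of the implicit midpoint low-rank GMRES scheme: Let F(X,t) = L(X) satisfy the dissipativity condition ⟨F(Z,t), Z⟩ ≤ α‖Z‖² for all matrices Z and all t (this is the one-sided Lipschitz condition ⟨F(X,t)−F(Y,t), X−Y⟩ ≤ α‖X−Y‖² together with F(0,t)=0). Fix constants α ∈ ℝ, c > 0 and a final time T > 0. Then there exist Δt₀ > 0 and C > 0, depending only on α, c and T, such that the following holds: for every 0 < Δt ≤ Δt₀, every N ∈ ℕ with N·Δt ≤ T, and all sequences of matrices (Xⁿ)ₙ and (X̃ⁿ⁺¹)ₙ satisfying for every n < N (i) the truncation bound ‖Xⁿ⁺¹‖ ≤ ‖X̃ⁿ⁺¹‖, and (ii) the residual bound ‖X̃ⁿ⁺¹ − Xⁿ − Δt·F((Xⁿ + X̃ⁿ⁺¹)/2, tⁿ⁺¹ᐟ²)‖ ≤ c·Δt²·(‖X̃ⁿ⁺¹‖ + ‖Xⁿ‖), one has ‖Xⁿ‖ ≤ C‖X⁰‖ for all n ≤ N. -/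
/-- Frobenius inner product on real `m₁ × m₂` matrices. -/
def finner {m₁ m₂ : ℕ} (A B : Matrix (Fin m₁) (Fin m₂) ℝ) : ℝ :=
  ∑ i, ∑ j, A i j * B i j

/-- Frobenius norm on real `m₁ × m₂` matrices. -/
noncomputable def fnorm {m₁ m₂ : ℕ} (A : Matrix (Fin m₁) (Fin m₂) ℝ) : ℝ :=
  Real.sqrt (∑ i, ∑ j, (A i j) ^ 2)

/-!
The scheme is an energy-stable perturbation of the implicit midpoint rule. Testing the step
against the midpoint `M = (Xⁿ + X̃ⁿ⁺¹)/2` turns `⟨X̃ⁿ⁺¹ - Xⁿ, M⟩` into `(‖X̃ⁿ⁺¹‖² - ‖Xⁿ‖²)/2`,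
dissipativity bounds the `Δt ⟨L M, M⟩` part by `α Δt ‖M‖²`, and Cauchy–Schwarz bounds the
residual part. With `‖M‖ ≤ (‖Xⁿ‖ + ‖X̃ⁿ⁺¹‖)/2` this gives
`‖X̃ⁿ⁺¹‖² - ‖Xⁿ‖² ≤ q (‖X̃ⁿ⁺¹‖ + ‖Xⁿ‖)²` with `q = O(Δt)`, i.e. `‖X̃ⁿ⁺¹‖ ≤ (1 + 4q) ‖Xⁿ‖`
once `q ≤ 1/2`. Truncation does not increase the norm, and the discrete Grönwall inequality
yields the bound `exp (K T)`, `K = 4c + 2 max α 0`, uniformly in `N Δt ≤ T`.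
-/

open Real

section Frobenius

variable {m₁ m₂ : ℕ}

def frobeniusToEuclidean :
    Matrix (Fin m₁) (Fin m₂) ℝ →ₗ[ℝ] EuclideanSpace ℝ (Fin m₁ × Fin m₂) :=
  (WithLp.linearEquiv 2 ℝ _).symm.toLinearMap ∘ₗ (LinearEquiv.curry ℝ ℝ _ _).symm.toLinearMap

@[simp]
theorem frobeniusToEuclidean_apply (A : Matrix (Fin m₁) (Fin m₂) ℝ) (p : Fin m₁ × Fin m₂) :
    frobeniusToEuclidean A p = A p.1 p.2 :=
  rfl

theorem finner_eq_inner_frobeniusToEuclidean (A B : Matrix (Fin m₁) (Fin m₂) ℝ) :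
    finner A B = inner ℝ (frobeniusToEuclidean A) (frobeniusToEuclidean B) := by
  simp [finner, PiLp.inner_apply, Fintype.sum_prod_type, mul_comm]

theorem fnorm_eq_norm_frobeniusToEuclidean (A : Matrix (Fin m₁) (Fin m₂) ℝ) :
    fnorm A = ‖frobeniusToEuclidean A‖ := by
  simp [fnorm, EuclideanSpace.norm_eq, Fintype.sum_prod_type]

theorem fnorm_nonneg (A : Matrix (Fin m₁) (Fin m₂) ℝ) : 0 ≤ fnorm A :=
  Real.sqrt_nonneg _

end Frobenius

section MidpointEnergy

variable {E : Type*} [NormedAddCommGroup E] [InnerProductSpace ℝ E]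

theorem sq_norm_sub_sq_norm_le_of_midpoint_residual {α c Δt : ℝ} (hc : 0 ≤ c) (hΔt : 0 ≤ Δt)
    {x y v : E} (hv : inner ℝ v ((2 : ℝ)⁻¹ • (x + y)) ≤ α * ‖(2 : ℝ)⁻¹ • (x + y)‖ ^ 2)
    (hres : ‖y - x - Δt • v‖ ≤ c * Δt ^ 2 * (‖y‖ + ‖x‖)) :
    ‖y‖ ^ 2 - ‖x‖ ^ 2 ≤ (c * Δt ^ 2 + max α 0 * Δt / 2) * (‖y‖ + ‖x‖) ^ 2 := by
  set m := (2 : ℝ)⁻¹ • (x + y)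
  set r := y - x - Δt • v
  have hm : ‖m‖ ≤ (‖y‖ + ‖x‖) / 2 := by
    rw [norm_smul, norm_inv, Real.norm_two, add_comm ‖y‖]
    linarith [norm_add_le x y]
  have hv' : inner ℝ v m ≤ max α 0 * ‖m‖ ^ 2 := hv.trans (by gcongr; exact le_max_left α 0)
  calc ‖y‖ ^ 2 - ‖x‖ ^ 2 = 2 * inner ℝ (y - x) m := by
        simp only [m, real_inner_smul_right, inner_sub_left, inner_add_right,
          real_inner_self_eq_norm_sq, real_inner_comm x y]
        ring
    _ = 2 * inner ℝ r m + 2 * Δt * inner ℝ v m := by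
        rw [show y - x = r + Δt • v by simp [r], inner_add_left, real_inner_smul_left]; ring
    _ ≤ 2 * (‖r‖ * ‖m‖) + 2 * Δt * (max α 0 * ‖m‖ ^ 2) := by
        gcongr
        exact real_inner_le_norm r m
    _ ≤ 2 * (c * Δt ^ 2 * (‖y‖ + ‖x‖) * ((‖y‖ + ‖x‖) / 2))
          + 2 * Δt * (max α 0 * ((‖y‖ + ‖x‖) / 2) ^ 2) := by
        gcongr
    _ = (c * Δt ^ 2 + max α 0 * Δt / 2) * (‖y‖ + ‖x‖) ^ 2 := by ring

end MidpointEnergy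

theorem le_one_add_four_mul_of_sq_sub_sq_le {a b q : ℝ} (hb : 0 ≤ b)
    (hq₀ : 0 ≤ q) (hq : q ≤ 1 / 2) (h : a ^ 2 - b ^ 2 ≤ q * (a + b) ^ 2) :
    a ≤ (1 + 4 * q) * b := by
  have hdiff : a - b ≤ q * (a + b) := by nlinarith
  nlinarith [mul_nonneg hb (mul_nonneg hq₀ (by linarith : 0 ≤ 1 - 2 * q))]

theorem le_exp_mul_of_le_one_add_mul {u : ℕ → ℝ} {q : ℝ} {N : ℕ} (hq : 0 ≤ q)
    (hu_nonneg : ∀ k, 0 ≤ u k) (hu : ∀ k < N, u (k + 1) ≤ (1 + q) * u k) {n : ℕ} (hn : n ≤ N) :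
    u n ≤ exp (q * n) * u 0 := by
  -- Freezing `u` after `N` makes the recursion hold for every `k`, as `discrete_gronwall` needs.
  have hstep : ∀ k ≥ 0, u (min (k + 1) N) ≤ (1 + q) * u (min k N) + 0 := by
    intro k _
    rcases lt_or_ge k N with hk | hk
    · simpa [min_eq_left hk.le, min_eq_left (Nat.succ_le_of_lt hk)] using hu k hk
    · rw [min_eq_right hk, min_eq_right (Nat.le_succ_of_le hk)]
      nlinarith [hu_nonneg N]
  have := discrete_gronwall (u := fun k ↦ u (min k N)) (hu_nonneg _) hstep
    (fun _ _ ↦ hq) (fun _ _ ↦ le_rfl) (Nat.zero_le n)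
  simpa [min_eq_left hn, mul_comm] using this

theorem fnorm_sq_sub_fnorm_sq_le_of_midpoint_residual {m₁ m₂ : ℕ} {α c Δt : ℝ} (hc : 0 ≤ c)
    (hΔt : 0 ≤ Δt) {L : Matrix (Fin m₁) (Fin m₂) ℝ →ₗ[ℝ] Matrix (Fin m₁) (Fin m₂) ℝ}
    (hL : ∀ Z, finner (L Z) Z ≤ α * fnorm Z ^ 2) {Xn Xt : Matrix (Fin m₁) (Fin m₂) ℝ}
    (hres : fnorm (Xt - Xn - Δt • L ((2 : ℝ)⁻¹ • (Xn + Xt))) ≤ c * Δt ^ 2 * (fnorm Xt + fnorm Xn)) :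
    fnorm Xt ^ 2 - fnorm Xn ^ 2 ≤ (c * Δt ^ 2 + max α 0 * Δt / 2) * (fnorm Xt + fnorm Xn) ^ 2 := by
  set W := (2 : ℝ)⁻¹ • (Xn + Xt)
  have hW : frobeniusToEuclidean W =
      (2 : ℝ)⁻¹ • (frobeniusToEuclidean Xn + frobeniusToEuclidean Xt) := by
    simp only [W, map_smul, map_add]
  simp only [fnorm_eq_norm_frobeniusToEuclidean, map_sub, map_smul] at hres ⊢
  refine sq_norm_sub_sq_norm_le_of_midpoint_residual hc hΔt ?_ hres
  rw [← hW, ← finner_eq_inner_frobeniusToEuclidean, ← fnorm_eq_norm_frobeniusToEuclidean]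
  exact hL W

theorem stability_implicit_midpoint_lrGMRES_general (α c T : ℝ) (hc : 0 < c) :
    ∃ Δt₀ > (0 : ℝ), ∃ C > (0 : ℝ),
      ∀ (m₁ m₂ : ℕ)
        (L : Matrix (Fin m₁) (Fin m₂) ℝ →ₗ[ℝ] Matrix (Fin m₁) (Fin m₂) ℝ),
        (∀ Z : Matrix (Fin m₁) (Fin m₂) ℝ, finner (L Z) Z ≤ α * (fnorm Z) ^ 2) →
        ∀ Δt : ℝ, 0 < Δt → Δt ≤ Δt₀ →
        ∀ N : ℕ, (N : ℝ) * Δt ≤ T →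
        ∀ X Xt : ℕ → Matrix (Fin m₁) (Fin m₂) ℝ,
          (∀ n < N, fnorm (X (n + 1)) ≤ fnorm (Xt (n + 1))) →
          (∀ n < N,
            fnorm (Xt (n + 1) - X n - Δt • L ((2 : ℝ)⁻¹ • (X n + Xt (n + 1))))
              ≤ c * Δt ^ 2 * (fnorm (Xt (n + 1)) + fnorm (X n))) →
          ∀ n ≤ N, fnorm (X n) ≤ C * fnorm (X 0) := by
  set K := 4 * c + 2 * max α 0
  have hK : 0 ≤ K := by positivity
  refine ⟨1 / (K + 1), by positivity, exp (K * T), exp_pos _, ?_⟩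
  intro m₁ m₂ L hL Δt hΔt hΔt₀ N hNT X Xt htrunc hres n hn
  have hKΔt : K * Δt + Δt ≤ 1 := by
    linarith [(le_div_iff₀' (by positivity : (0 : ℝ) < K + 1)).1 hΔt₀]
  have hq : 4 * (c * Δt ^ 2 + max α 0 * Δt / 2) ≤ K * Δt := by
    nlinarith [mul_nonneg hc.le hΔt.le]
  have hstep : ∀ k < N, fnorm (X (k + 1)) ≤ (1 + K * Δt) * fnorm (X k) := fun k hk ↦
    calc fnorm (X (k + 1)) ≤ fnorm (Xt (k + 1)) := htrunc k hk
      _ ≤ (1 + 4 * (c * Δt ^ 2 + max α 0 * Δt / 2)) * fnorm (X k) :=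
        le_one_add_four_mul_of_sq_sub_sq_le (fnorm_nonneg _) (by positivity) (by linarith)
          (fnorm_sq_sub_fnorm_sq_le_of_midpoint_residual hc.le hΔt.le hL (hres k hk))
      _ ≤ (1 + K * Δt) * fnorm (X k) := by gcongr; exact fnorm_nonneg _
  have hnT : K * Δt * n ≤ K * T := by
    have hnΔt : (n : ℝ) * Δt ≤ T := le_trans (by gcongr) hNT
    nlinarith [mul_le_mul_of_nonneg_left hnΔt hK]
  calc fnorm (X n) ≤ exp (K * Δt * n) * fnorm (X 0) :=
        le_exp_mul_of_le_one_add_mul (by positivity) (fun _ ↦ fnorm_nonneg _) hstep hn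
    _ ≤ exp (K * T) * fnorm (X 0) := by gcongr; exact fnorm_nonneg _

/-- Stability of the implicit midpoint low-rank GMRES scheme. -/
theorem stability_implicit_midpoint_lrGMRES (α c T : ℝ) (hc : 0 < c) (hT : 0 < T) :
    ∃ Δt₀ > (0 : ℝ), ∃ C > (0 : ℝ),
      ∀ (m₁ m₂ : ℕ)
        (L : Matrix (Fin m₁) (Fin m₂) ℝ →ₗ[ℝ] Matrix (Fin m₁) (Fin m₂) ℝ),
        (∀ Z : Matrix (Fin m₁) (Fin m₂) ℝ, finner (L Z) Z ≤ α * (fnorm Z) ^ 2) →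
        ∀ Δt : ℝ, 0 < Δt → Δt ≤ Δt₀ →
        ∀ N : ℕ, (N : ℝ) * Δt ≤ T →
        ∀ X Xt : ℕ → Matrix (Fin m₁) (Fin m₂) ℝ,
          (∀ n < N, fnorm (X (n + 1)) ≤ fnorm (Xt (n + 1))) →
          (∀ n < N,
            fnorm (Xt (n + 1) - X n - Δt • L ((2 : ℝ)⁻¹ • (X n + Xt (n + 1))))
              ≤ c * Δt ^ 2 * (fnorm (Xt (n + 1)) + fnorm (X n))) →
          ∀ n ≤ N, fnorm (X n) ≤ C * fnorm (X 0) :=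
  stability_implicit_midpoint_lrGMRES_general α c T hc
end

section
/- Convergence of the implicit midpoint low-rank GMRES scheme: Let L be an ℝ-linear map on real m₁×m₂ matrices with ⟨L(Z), Z⟩ ≤ α‖Z‖² for all Z. Fix constants α ∈ ℝ, c > 0, c₀ > 0 and a final time T > 0. Then there exist Δt₀ > 0 and C > 0, depending only on α, c, c₀ and T, such that for every 0 < Δt ≤ Δt₀, every N with N·Δt ≤ T, and all sequences of matrices (Xⁿ), (X̃ⁿ⁺¹), (Yⁿ), (Gⁿ), (rⁿ) satisfying for all n < N: (i) Yⁿ⁺¹ − Yⁿ = Δt·L((Yⁿ + Yⁿ⁺¹)/2) + Gⁿ with ‖Gⁿ‖ ≤ c·Δt² (exact-solution midpoint identity with local truncation error), (ii) X̃ⁿ⁺¹ − Xⁿ = Δt·L((Xⁿ + X̃ⁿ⁺¹)/2) + rⁿ with ‖rⁿ‖ ≤ c·Δt² (converged GMRES step), (iii) ‖Xⁿ⁺¹ − X̃ⁿ⁺¹‖ ≤ c·Δt² (truncation step), and (iv) the initial error satisfies ‖X⁰ − Y⁰‖ ≤ c₀·Δt, one has ‖Xⁿ − Yⁿ‖ ≤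 C·Δt for all n ≤ N. -/
open scoped RealInnerProductSpace
open Matrix

lemma midpoint_step_sub {R M : Type*} [Ring R] [AddCommGroup M] [Module R M] (L : M →ₗ[R] M)
    (h s : R) {a b g a' b' g' : M} (hab : b - a = h • L (s • (a + b)) + g)
    (hab' : b' - a' = h • L (s • (a' + b')) + g') :
    (b - b') - (a - a') = h • L (s • ((a - a') + (b - b'))) + (g - g') := by
  calc (b - b') - (a - a') = (b - a) - (b' - a') := by abel
    _ = _ := by
      rw [hab, hab', show a - a' + (b - b') = (a + b) - (a' + b') by abel, smul_sub, map_sub,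
        smul_sub]
      abel

section MidpointStep

variable {E : Type*} [NormedAddCommGroup E] [InnerProductSpace ℝ E]

lemma norm_sub_norm_le_of_midpoint_step (L : E →ₗ[ℝ] E) {β Δt : ℝ} (hβ : 0 ≤ β)
    (hL : ∀ z, ⟪L z, z⟫ ≤ β * ‖z‖ ^ 2) (hΔt : 0 ≤ Δt) {a b g : E}
    (hab : b - a = Δt • L ((2 : ℝ)⁻¹ • (a + b)) + g) :
    ‖b‖ - ‖a‖ ≤ Δt * β / 2 * (‖a‖ + ‖b‖) + ‖g‖ := by
  set m : E := (2 : ℝ)⁻¹ • (a + b)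
  have hsum : a + b = (2 : ℝ) • m := by simp only [m, smul_smul]; norm_num
  have hm : ‖m‖ ≤ (‖a‖ + ‖b‖) / 2 := by
    simp only [m, norm_smul]
    norm_num
    linarith [norm_add_le a b]
  have henergy : ‖b‖ ^ 2 - ‖a‖ ^ 2 = 2 * Δt * ⟪L m, m⟫ + ⟪g, a + b⟫ := by
    have hdiff : ‖b‖ ^ 2 - ‖a‖ ^ 2 = ⟪b - a, a + b⟫ := by
      simp only [inner_sub_left, inner_add_right, real_inner_self_eq_norm_sq, real_inner_comm a b]
      ring
    rw [hdiff, hab, inner_add_left, real_inner_smul_left, hsum, real_inner_smul_right]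
    ring
  have hLm : ⟪L m, m⟫ ≤ β * ((‖a‖ + ‖b‖) / 2) ^ 2 := by
    calc ⟪L m, m⟫ ≤ β * ‖m‖ ^ 2 := hL m
      _ ≤ β * ((‖a‖ + ‖b‖) / 2) ^ 2 := by gcongr
  have hg : ⟪g, a + b⟫ ≤ ‖g‖ * (‖a‖ + ‖b‖) :=
    (real_inner_le_norm _ _).trans (by gcongr; exact norm_add_le a b)
  have hsq : (‖b‖ - ‖a‖) * (‖a‖ + ‖b‖) ≤ (Δt * β / 2 * (‖a‖ + ‖b‖) + ‖g‖) * (‖a‖ + ‖b‖) := by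
    have := mul_le_mul_of_nonneg_left hLm (by positivity : 0 ≤ 2 * Δt)
    linarith
  rcases (add_nonneg (norm_nonneg a) (norm_nonneg b)).eq_or_lt with hzero | hpos
  · obtain ⟨ha, hb⟩ : ‖a‖ = 0 ∧ ‖b‖ = 0 := by
      constructor <;> linarith [norm_nonneg a, norm_nonneg b]
    simp [ha, hb]
  · exact le_of_mul_le_mul_right hsq hpos

lemma norm_le_of_midpoint_step (L : E →ₗ[ℝ] E) {β Δt : ℝ} (hβ : 0 ≤ β)
    (hL : ∀ z, ⟪L z, z⟫ ≤ β * ‖z‖ ^ 2) (hΔt : 0 ≤ Δt) (hΔtβ : Δt * β ≤ 1 / 2) {a b g : E}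
    (hab : b - a = Δt • L ((2 : ℝ)⁻¹ • (a + b)) + g) :
    ‖b‖ ≤ (1 + 2 * (Δt * β)) * ‖a‖ + 2 * ‖g‖ := by
  have h := norm_sub_norm_le_of_midpoint_step L hβ hL hΔt hab
  have hx : 0 ≤ Δt * β := mul_nonneg hΔt hβ
  nlinarith [norm_nonneg a, norm_nonneg b, norm_nonneg g, mul_nonneg hx (norm_nonneg a),
    mul_nonneg hx (norm_nonneg b), mul_nonneg hx (norm_nonneg g)]

end MidpointStep

noncomputable def Matrix.toEuclideanSpace {m n : Type*} :
    Matrix m n ℝ ≃ₗ[ℝ] EuclideanSpace ℝ (m × n) :=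
  (LinearEquiv.curry ℝ ℝ m n).symm.trans (WithLp.linearEquiv 2 ℝ (m × n → ℝ)).symm

@[simp]
lemma Matrix.toEuclideanSpace_apply {m n : Type*} (A : Matrix m n ℝ) (p : m × n) :
    toEuclideanSpace A p = A p.1 p.2 := rfl

lemma fnorm_eq_norm {m₁ m₂ : ℕ} (A : Matrix (Fin m₁) (Fin m₂) ℝ) :
    fnorm A = ‖toEuclideanSpace A‖ := by
  simp [fnorm, EuclideanSpace.norm_eq, Fintype.sum_prod_type]

lemma finner_eq_inner {m₁ m₂ : ℕ} (A B : Matrix (Fin m₁) (Fin m₂) ℝ) :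
    finner A B = ⟪toEuclideanSpace A, toEuclideanSpace B⟫ := by
  simp [finner, PiLp.inner_apply, Fintype.sum_prod_type, mul_comm]

lemma fnorm_le_of_midpoint_step {m₁ m₂ : ℕ}
    (L : Matrix (Fin m₁) (Fin m₂) ℝ →ₗ[ℝ] Matrix (Fin m₁) (Fin m₂) ℝ) {β Δt : ℝ} (hβ : 0 ≤ β)
    (hL : ∀ Z, finner (L Z) Z ≤ β * fnorm Z ^ 2) (hΔt : 0 ≤ Δt) (hΔtβ : Δt * β ≤ 1 / 2)
    {a b g : Matrix (Fin m₁) (Fin m₂) ℝ} (hab : b - a = Δt • L ((2 : ℝ)⁻¹ • (a + b)) + g) :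
    fnorm b ≤ (1 + 2 * (Δt * β)) * fnorm a + 2 * fnorm g := by
  let e : Matrix (Fin m₁) (Fin m₂) ℝ ≃ₗ[ℝ] EuclideanSpace ℝ (Fin m₁ × Fin m₂) := toEuclideanSpace
  simp only [fnorm_eq_norm]
  refine norm_le_of_midpoint_step (e.conj L) hβ (fun z => ?_) hΔt hΔtβ (a := e a) (b := e b) ?_
  · obtain ⟨Z, rfl⟩ := e.surjective z
    simpa [LinearEquiv.conj_apply_apply, finner_eq_inner, fnorm_eq_norm] using hL Z
  · simpa [LinearEquiv.conj_apply_apply] using congrArg e hab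

lemma fnorm_sub_le_of_perturbed_midpoint_steps {m₁ m₂ : ℕ}
    (L : Matrix (Fin m₁) (Fin m₂) ℝ →ₗ[ℝ] Matrix (Fin m₁) (Fin m₂) ℝ) {β Δt δ : ℝ} (hβ : 0 ≤ β)
    (hL : ∀ Z, finner (L Z) Z ≤ β * fnorm Z ^ 2) (hΔt : 0 ≤ Δt) (hΔtβ : Δt * β ≤ 1 / 2)
    {x x' xt y y' g r : Matrix (Fin m₁) (Fin m₂) ℝ}
    (hy : y' - y = Δt • L ((2 : ℝ)⁻¹ • (y + y')) + g) (hg : fnorm g ≤ δ)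
    (hxt : xt - x = Δt • L ((2 : ℝ)⁻¹ • (x + xt)) + r) (hr : fnorm r ≤ δ)
    (htr : fnorm (x' - xt) ≤ δ) :
    fnorm (x' - y') ≤ (1 + 2 * (Δt * β)) * fnorm (x - y) + 5 * δ := by
  have hstab := fnorm_le_of_midpoint_step L hβ hL hΔt hΔtβ (midpoint_step_sub L _ _ hxt hy)
  simp only [fnorm_eq_norm, map_sub] at *
  linarith [norm_sub_le_norm_sub_add_norm_sub (toEuclideanSpace x') (toEuclideanSpace xt)
    (toEuclideanSpace y'), norm_sub_le (toEuclideanSpace r) (toEuclideanSpace g)]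

lemma discrete_gronwall_const_of_lt {u : ℕ → ℝ} {N : ℕ} {a b : ℝ} (hu : ∀ n, 0 ≤ u n)
    (ha : 0 ≤ a) (hb : 0 ≤ b) (hstep : ∀ n < N, u (n + 1) ≤ (1 + a) * u n + b) :
    ∀ n ≤ N, u n ≤ (u 0 + n * b) * Real.exp (n * a) := by
  intro n hn
  -- freeze `u` after the horizon so that the recursion holds for all indices
  have hfrozen : ∀ k ≥ 0, u (min (k + 1) N) ≤ (1 + a) * u (min k N) + b := by
    intro k _
    rcases lt_or_ge k N with hk | hk
    · rw [min_eq_left hk, min_eq_left hk.le]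
      exact hstep k hk
    · rw [min_eq_right hk, min_eq_right (by omega)]
      nlinarith [hu N]
  have hbound := discrete_gronwall (u := fun k => u (min k N)) (c := fun _ => a) (b := fun _ => b)
    (hu _) hfrozen (fun _ _ => ha) (fun _ _ => hb) (Nat.zero_le n)
  simpa [min_eq_left hn] using hbound

/-- Convergence of the implicit midpoint low-rank GMRES scheme. -/
theorem convergence_implicit_midpoint_lrGMRES (α c c₀ T : ℝ)
    (hc : 0 < c) (hc₀ : 0 < c₀) (hT : 0 < T) :
    ∃ Δt₀ > (0 : ℝ), ∃ C > (0 : ℝ),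
      ∀ (m₁ m₂ : ℕ)
        (L : Matrix (Fin m₁) (Fin m₂) ℝ →ₗ[ℝ] Matrix (Fin m₁) (Fin m₂) ℝ),
        (∀ Z : Matrix (Fin m₁) (Fin m₂) ℝ, finner (L Z) Z ≤ α * (fnorm Z) ^ 2) →
        ∀ Δt : ℝ, 0 < Δt → Δt ≤ Δt₀ →
        ∀ N : ℕ, (N : ℝ) * Δt ≤ T →
        ∀ X Xt Y G r : ℕ → Matrix (Fin m₁) (Fin m₂) ℝ,
          -- (i) exact-solution midpoint identity with local truncation error
          (∀ n < N, Y (n + 1) - Y n = Δt • L ((2 : ℝ)⁻¹ • (Y n + Y (n + 1))) + G n) →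
          (∀ n < N, fnorm (G n) ≤ c * Δt ^ 2) →
          -- (ii) converged GMRES step
          (∀ n < N, Xt (n + 1) - X n = Δt • L ((2 : ℝ)⁻¹ • (X n + Xt (n + 1))) + r n) →
          (∀ n < N, fnorm (r n) ≤ c * Δt ^ 2) →
          -- (iii) truncation step
          (∀ n < N, fnorm (X (n + 1) - Xt (n + 1)) ≤ c * Δt ^ 2) →
          -- (iv) initial error
          fnorm (X 0 - Y 0) ≤ c₀ * Δt →
          ∀ n ≤ N, fnorm (X n - Y n) ≤ C * Δt := by
  set β := max α 0
  have hβ : 0 ≤ β := le_max_right α 0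
  refine ⟨1 / (2 * β + 1), by positivity, (c₀ + 5 * c * T) * Real.exp (2 * β * T), by positivity,
    ?_⟩
  intro m₁ m₂ L hL Δt hΔt hΔt₀ N hNT X Xt Y G r hY hG hXt hr htr h₀ n hn
  have hLβ : ∀ Z, finner (L Z) Z ≤ β * fnorm Z ^ 2 := fun Z =>
    (hL Z).trans (by gcongr; exact le_max_left α 0)
  have hΔtβ : Δt * β ≤ 1 / 2 := by
    rw [le_div_iff₀ (by positivity)] at hΔt₀
    nlinarith
  have hnT : (n : ℝ) * Δt ≤ T := le_trans (by gcongr) hNT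
  have hgronwall := discrete_gronwall_const_of_lt (u := fun k => fnorm (X k - Y k))
    (fun _ => Real.sqrt_nonneg _) (by positivity) (by positivity)
    (fun k hk => fnorm_sub_le_of_perturbed_midpoint_steps L hβ hLβ hΔt.le hΔtβ
      (hY k hk) (hG k hk) (hXt k hk) (hr k hk) (htr k hk)) n hn
  have hsum : c₀ * Δt + n * (5 * (c * Δt ^ 2)) ≤ (c₀ + 5 * c * T) * Δt := by
    nlinarith [mul_le_mul_of_nonneg_left hnT (by positivity : 0 ≤ 5 * c * Δt)]
  have hexponent : n * (2 * (Δt * β)) ≤ 2 * β * T := by nlinarith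
  calc fnorm (X n - Y n)
      ≤ (c₀ * Δt + n * (5 * (c * Δt ^ 2))) * Real.exp (n * (2 * (Δt * β))) :=
        hgronwall.trans (by gcongr)
    _ ≤ (c₀ + 5 * c * T) * Δt * Real.exp (2 * β * T) := by gcongr
    _ = (c₀ + 5 * c * T) * Real.exp (2 * β * T) * Δt := by ring
end
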